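/- Let X, Y, Z be Banach spaces. If the pair (X × Y, 𝕂) has the Bishop-Phelps-Bollobás point property for bilinear forms and Z has property β with constant ρ ∈ [0,1), then the pair (X × Y, Z) has the Bishop-Phelps-Bollobás point property for bilinear mappings. -/

import Mathlib

open RCLike


def BPBppBilin (𝕜 X Y Z : Type*) [RCLike 𝕜] [NormedAddCommGroup X] [NormedSpace 𝕜 X]
    [NormedAddCommGroup Y] [NormedSpace 𝕜 Y] [NormedAddCommGroup Z] [NormedSpace 𝕜 Z] : Prop :=
  ∀ ε > (0:ℝ), ∃ η > (0:ℝ), ∀ (B : X →L[𝕜] Y →L[𝕜] Z) (x : X) (y : Y),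
    ‖B‖ = 1 → ‖x‖ = 1 → ‖y‖ = 1 → 1 - η < ‖B x y‖ →
    ∃ A : X →L[𝕜] Y →L[𝕜] Z, ‖A‖ = 1 ∧ ‖A x y‖ = 1 ∧ ‖A - B‖ < ε


def PropertyBeta (𝕜 Y : Type*) [RCLike 𝕜] [NormedAddCommGroup Y] [NormedSpace 𝕜 Y] (ρ : ℝ) : Prop :=
  ∃ (I : Type) (z : I → Y) (f : I → (Y →L[𝕜] 𝕜)),
    (∀ i, ‖z i‖ = 1) ∧ (∀ i, ‖f i‖ = 1) ∧ (∀ i, f i (z i) = 1) ∧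
    (∀ i j, i ≠ j → ‖f i (z j)‖ ≤ ρ) ∧ (∀ y : Y, ‖y‖ = ⨆ i, ‖f i y‖)

lemma my_norm_smul {𝕜 E : Type*} [NormedField 𝕜] [SeminormedAddCommGroup E] [NormedSpace 𝕜 E]
    (c : 𝕜) (x : E) : ‖c • x‖ = ‖c‖ * ‖x‖ := by
  haveI : IsBoundedSMul 𝕜 E := NormedSpace.toIsBoundedSMul
  exact norm_smul c x

lemma norm_smul_clm {𝕜 X Y W : Type*} [RCLike 𝕜] [NormedAddCommGroup X] [NormedSpace 𝕜 X]
    [NormedAddCommGroup Y] [NormedSpace 𝕜 Y] [NormedAddCommGroup W] [NormedSpace 𝕜 W]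
    (c : 𝕜) (b : X →L[𝕜] Y →L[𝕜] W) : ‖c • b‖ = ‖c‖ * ‖b‖ := my_norm_smul c b

set_option maxHeartbeats 1000000 in
theorem stmt_12 (𝕜 X Y Z : Type*) [RCLike 𝕜] [NormedAddCommGroup X] [NormedSpace 𝕜 X]
    [CompleteSpace X] [NormedAddCommGroup Y] [NormedSpace 𝕜 Y] [CompleteSpace Y]
    [NormedAddCommGroup Z] [NormedSpace 𝕜 Z] [CompleteSpace Z]
    (h : BPBppBilin 𝕜 X Y 𝕜) (ρ : ℝ) (hρ0 : 0 ≤ ρ) (hρ1 : ρ < 1)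
    (hβ : PropertyBeta 𝕜 Z ρ) : BPBppBilin 𝕜 X Y Z := by
  intro ε hε
  obtain ⟨I, z, f, hz1, hf1, hfz, hρij, hsup⟩ := hβ
  have h1ρ : (0:ℝ) < 1 - ρ := by linarith
  have h1ρ' : (0:ℝ) < 1 + ρ := by linarith
  obtain ⟨δ, hδdef⟩ : ∃ d : ℝ, d = ε * (1 - ρ) / (4 * (1 + ρ)) := ⟨_, rfl⟩
  have hδpos : 0 < δ := by rw [hδdef]; positivity
  obtain ⟨η₀, hη₀pos, hBPB⟩ := h δ hδpos
  obtain ⟨η, hηdef⟩ : ∃ e : ℝ, e = min η₀ (min δ (1/2)) := ⟨_, rfl⟩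
  have hηpos : 0 < η := by rw [hηdef]; positivity
  have hηη₀ : η ≤ η₀ := by rw [hηdef]; exact min_le_left _ _
  have hηδ : η ≤ δ := by rw [hηdef]; exact le_trans (min_le_right _ _) (min_le_left _ _)
  have hηhalf : η ≤ 1/2 := by rw [hηdef]; exact le_trans (min_le_right _ _) (min_le_right _ _)
  refine ⟨η, hηpos, ?_⟩
  intro B x₀ y₀ hB hx₀ hy₀ hBpt
  have hfle : ∀ j (w : Z), ‖f j w‖ ≤ ‖w‖ := fun j w => by
    simpa [hf1 j] using (f j).le_opNorm w
  -- I is nonempty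
  have hne : Nonempty I := by
    by_contra hI
    haveI : IsEmpty I := not_nonempty_iff.mp hI
    have h0 : ‖B x₀ y₀‖ = 0 := by rw [hsup]; exact Real.iSup_of_isEmpty _
    rw [h0] at hBpt
    linarith
  -- pick the index i
  obtain ⟨i, hi⟩ : ∃ i, 1 - η < ‖f i (B x₀ y₀)‖ := by
    have h' := hBpt
    rw [hsup] at h'
    exact exists_lt_of_lt_ciSup h'
  -- the scalar bilinear form b
  obtain ⟨b, hbdef⟩ : ∃ b : X →L[𝕜] Y →L[𝕜] 𝕜,
      b = (ContinuousLinearMap.compL 𝕜 Y Z 𝕜 (f i)).comp B := ⟨_, rfl⟩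
  have hbapp : ∀ x y, b x y = f i (B x y) := fun x y => by rw [hbdef]; rfl
  have hble : ‖b‖ ≤ 1 := by
    refine ContinuousLinearMap.opNorm_le_bound _ zero_le_one fun x => ?_
    refine ContinuousLinearMap.opNorm_le_bound _ (by positivity) fun y => ?_
    calc ‖b x y‖ ≤ ‖B x y‖ := by rw [hbapp]; exact hfle i _
      _ ≤ ‖B‖ * ‖x‖ * ‖y‖ := B.le_opNorm₂ x y
      _ = 1 * ‖x‖ * ‖y‖ := by rw [hB]
  have hbpt : 1 - η < ‖b x₀ y₀‖ := by rw [hbapp]; exact hi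
  have hbge : 1 - η < ‖b‖ := by
    calc 1 - η < ‖b x₀ y₀‖ := hbpt
      _ ≤ ‖b‖ * ‖x₀‖ * ‖y₀‖ := b.le_opNorm₂ x₀ y₀
      _ = ‖b‖ := by rw [hx₀, hy₀]; ring
  have hbpos : 0 < ‖b‖ := by linarith
  -- normalized scalar form
  obtain ⟨b', hb'def⟩ : ∃ b' : X →L[𝕜] Y →L[𝕜] 𝕜, b' = ((‖b‖ : 𝕜))⁻¹ • b := ⟨_, rfl⟩
  have hnc : ‖((‖b‖ : 𝕜))⁻¹‖ = ‖b‖⁻¹ := by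
    rw [norm_inv, RCLike.norm_ofReal, abs_of_pos hbpos]
  have hb'norm : ‖b'‖ = 1 := by
    rw [hb'def, norm_smul_clm, hnc, inv_mul_cancel₀ (ne_of_gt hbpos)]
  have hb'pt : 1 - η₀ < ‖b' x₀ y₀‖ := by
    have : ‖b' x₀ y₀‖ = ‖b‖⁻¹ * ‖b x₀ y₀‖ := by
      have he : b' x₀ y₀ = ((‖b‖ : 𝕜))⁻¹ • (b x₀ y₀) := by rw [hb'def]; rfl
      rw [he, my_norm_smul, hnc]
    rw [this]
    have h1 : 1 ≤ ‖b‖⁻¹ := (one_le_inv₀ hbpos).mpr hble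
    have h2 : ‖b x₀ y₀‖ ≤ ‖b‖⁻¹ * ‖b x₀ y₀‖ := by
      calc ‖b x₀ y₀‖ = 1 * ‖b x₀ y₀‖ := (one_mul _).symm
        _ ≤ ‖b‖⁻¹ * ‖b x₀ y₀‖ := mul_le_mul_of_nonneg_right h1 (norm_nonneg _)
    have : 1 - η < ‖b‖⁻¹ * ‖b x₀ y₀‖ := lt_of_lt_of_le hbpt h2
    linarith
  obtain ⟨a, ha1, ha2, ha3⟩ := hBPB b' x₀ y₀ hb'norm hx₀ hy₀ hb'pt
  -- ‖a - b‖ < δ + η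
  have hb'b : ‖b' - b‖ < η := by
    have : b' - b = ((‖b‖⁻¹ - 1 : ℝ) : 𝕜) • b := by
      rw [hb'def]; ext x y
      simp only [ContinuousLinearMap.sub_apply, ContinuousLinearMap.smul_apply, smul_eq_mul]
      push_cast
      ring
    rw [this, norm_smul_clm, RCLike.norm_ofReal]
    have h1 : 1 ≤ ‖b‖⁻¹ := (one_le_inv₀ hbpos).mpr hble
    rw [abs_of_nonneg (by linarith)]
    have : (‖b‖⁻¹ - 1) * ‖b‖ = 1 - ‖b‖ := by field_simp
    rw [this]
    linarith
  have hab : ‖a - b‖ < δ + η := by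
    calc ‖a - b‖ ≤ ‖a - b'‖ + ‖b' - b‖ := norm_sub_le_norm_sub_add_norm_sub a b' b
      _ < δ + η := by linarith
  -- the perturbation parameter
  obtain ⟨r, hrdef⟩ : ∃ r : ℝ, r = ρ * (δ + η) / (1 - ρ) := ⟨_, rfl⟩
  have hr0 : 0 ≤ r := by rw [hrdef]; positivity
  have hrρ : r * (1 - ρ) = ρ * (δ + η) := by
    rw [hrdef]; field_simp
  -- g = (1+r) a - b
  obtain ⟨g, hgdef⟩ : ∃ g : X →L[𝕜] Y →L[𝕜] 𝕜, g = ((1 + r : ℝ) : 𝕜) • a - b := ⟨_, rfl⟩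
  have hgapp : ∀ x y, g x y = ((1 + r : ℝ) : 𝕜) * a x y - b x y := by
    intro x y; simp [hgdef, smul_eq_mul]
  have hg : ‖g‖ < r + (δ + η) := by
    have habnn : (0:ℝ) ≤ r + ‖a - b‖ := by positivity
    have hle : ‖g‖ ≤ r + ‖a - b‖ := by
      refine ContinuousLinearMap.opNorm_le_bound _ habnn fun x => ?_
      refine ContinuousLinearMap.opNorm_le_bound _ (by positivity) fun y => ?_
      have h1 : g x y = ((r : ℝ) : 𝕜) * a x y + (a - b) x y := by
        rw [hgapp]
        simp only [ContinuousLinearMap.sub_apply]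
        push_cast
        ring
      rw [h1]
      have h2 : ‖((r : ℝ) : 𝕜) * a x y‖ ≤ r * (‖x‖ * ‖y‖) := by
        rw [norm_mul, RCLike.norm_ofReal, abs_of_nonneg hr0]
        have h4 := a.le_opNorm₂ x y
        rw [ha1, one_mul] at h4
        exact mul_le_mul_of_nonneg_left h4 hr0
      have h3 : ‖(a - b) x y‖ ≤ ‖a - b‖ * ‖x‖ * ‖y‖ := (a - b).le_opNorm₂ x y
      calc ‖((r : ℝ) : 𝕜) * a x y + (a - b) x y‖
          ≤ ‖((r : ℝ) : 𝕜) * a x y‖ + ‖(a - b) x y‖ := norm_add_le _ _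
        _ ≤ r * (‖x‖ * ‖y‖) + ‖a - b‖ * ‖x‖ * ‖y‖ := add_le_add h2 h3
        _ = (r + ‖a - b‖) * ‖x‖ * ‖y‖ := by ring
    linarith
  have hρg : ρ * ‖g‖ ≤ r := by
    have e1 : ρ * ‖g‖ ≤ ρ * (r + (δ + η)) := mul_le_mul_of_nonneg_left hg.le hρ0
    have e3 : ρ * (r + (δ + η)) = ρ * r + r * (1 - ρ) := by
      linear_combination -hrρ
    have e4 : ρ * r + r * (1 - ρ) = r := by ring
    linarith
  -- the rank-one perturbation T, T x y = g x y • z i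
  obtain ⟨T, hTdef⟩ : ∃ T : X →L[𝕜] Y →L[𝕜] Z,
      T = ((ContinuousLinearMap.smulRightL 𝕜 Y Z).flip (z i)).comp g := ⟨_, rfl⟩
  have hTapp : ∀ x y, T x y = g x y • z i := fun x y => by rw [hTdef]; rfl
  have hT : ‖T‖ ≤ ‖g‖ := by
    refine ContinuousLinearMap.opNorm_le_bound _ (norm_nonneg g) fun x => ?_
    refine ContinuousLinearMap.opNorm_le_bound _ (by positivity) fun y => ?_
    rw [hTapp, my_norm_smul, hz1 i, mul_one]
    calc ‖g x y‖ ≤ ‖g‖ * ‖x‖ * ‖y‖ := g.le_opNorm₂ x y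
      _ = ‖g‖ * ‖x‖ * ‖y‖ := rfl
  -- key pointwise computations
  have happ_i : ∀ x y, f i ((B + T) x y) = ((1 + r : ℝ) : 𝕜) * a x y := by
    intro x y
    have : (B + T) x y = B x y + g x y • z i := by simp [hTapp]
    rw [this, map_add, map_smul, hfz i, smul_eq_mul, mul_one, hgapp, hbapp]
    ring
  have happ_j : ∀ x y, (B + T) x y = B x y + g x y • z i := by
    intro x y; simp [hTapp]
  -- norm bound on B + T
  have hbound : ∀ x y, ‖(B + T) x y‖ ≤ (1 + r) * (‖x‖ * ‖y‖) := by
    intro x y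
    rw [hsup]
    refine ciSup_le fun j => ?_
    by_cases hj : j = i
    · subst hj
      rw [happ_i, norm_mul, RCLike.norm_ofReal, abs_of_nonneg (by linarith)]
      have h5 := a.le_opNorm₂ x y
      rw [ha1, one_mul] at h5
      exact mul_le_mul_of_nonneg_left h5 (by linarith)
    · rw [happ_j x y, map_add, map_smul, smul_eq_mul]
      have h1 : ‖f j (B x y)‖ ≤ ‖x‖ * ‖y‖ := by
        calc ‖f j (B x y)‖ ≤ ‖B x y‖ := hfle j _
          _ ≤ ‖B‖ * ‖x‖ * ‖y‖ := B.le_opNorm₂ x y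
          _ = ‖x‖ * ‖y‖ := by rw [hB]; ring
      have h2 : ‖g x y‖ ≤ ‖g‖ * ‖x‖ * ‖y‖ := g.le_opNorm₂ x y
      have h3 : ‖f j (z i)‖ ≤ ρ := hρij j i hj
      calc ‖f j (B x y) + g x y * f j (z i)‖
          ≤ ‖f j (B x y)‖ + ‖g x y‖ * ‖f j (z i)‖ := by
            rw [← norm_mul]; exact norm_add_le _ _
        _ ≤ ‖x‖ * ‖y‖ + (‖g‖ * ‖x‖ * ‖y‖) * ρ :=
            add_le_add h1 (mul_le_mul h2 h3 (norm_nonneg _) (by positivity))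
        _ = ‖x‖ * ‖y‖ + (ρ * ‖g‖) * (‖x‖ * ‖y‖) := by ring
        _ ≤ ‖x‖ * ‖y‖ + r * (‖x‖ * ‖y‖) :=
            add_le_add_right (mul_le_mul_of_nonneg_right hρg (by positivity)) _
        _ = (1 + r) * (‖x‖ * ‖y‖) := by ring
  have hBTle : ‖B + T‖ ≤ 1 + r := by
    refine ContinuousLinearMap.opNorm_le_bound _ (by linarith) fun x => ?_
    refine ContinuousLinearMap.opNorm_le_bound _ (by positivity) fun y => ?_
    calc ‖(B + T) x y‖ ≤ (1 + r) * (‖x‖ * ‖y‖) := hbound x y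
      _ = (1 + r) * ‖x‖ * ‖y‖ := by ring
  have hpt : ‖(B + T) x₀ y₀‖ = 1 + r := by
    have hge : 1 + r ≤ ‖(B + T) x₀ y₀‖ := by
      have h1 : ‖f i ((B + T) x₀ y₀)‖ ≤ ‖(B + T) x₀ y₀‖ := hfle i _
      rw [happ_i, norm_mul, RCLike.norm_ofReal, abs_of_nonneg (by linarith : (0:ℝ) ≤ 1 + r),
        ha2, mul_one] at h1
      exact h1
    have hle : ‖(B + T) x₀ y₀‖ ≤ 1 + r := by
      have := hbound x₀ y₀
      rw [hx₀, hy₀] at this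
      simpa using this
    linarith
  have hBTnorm : ‖B + T‖ = 1 + r := by
    refine le_antisymm hBTle ?_
    calc 1 + r = ‖(B + T) x₀ y₀‖ := hpt.symm
      _ ≤ ‖B + T‖ * ‖x₀‖ * ‖y₀‖ := (B + T).le_opNorm₂ x₀ y₀
      _ = ‖B + T‖ := by rw [hx₀, hy₀]; ring
  -- the final map
  have h1r : (0:ℝ) < 1 + r := by linarith
  obtain ⟨A, hAdef⟩ : ∃ A : X →L[𝕜] Y →L[𝕜] Z, A = (((1 + r : ℝ) : 𝕜))⁻¹ • (B + T) := ⟨_, rfl⟩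
  have hnc2 : ‖(((1 + r : ℝ) : 𝕜))⁻¹‖ = (1 + r)⁻¹ := by
    rw [norm_inv, RCLike.norm_ofReal, abs_of_pos h1r]
  refine ⟨A, ?_, ?_, ?_⟩
  · rw [hAdef, norm_smul_clm, hnc2, hBTnorm, inv_mul_cancel₀ (ne_of_gt h1r)]
  · have : A x₀ y₀ = (((1 + r : ℝ) : 𝕜))⁻¹ • ((B + T) x₀ y₀) := by simp [hAdef]
    rw [this, my_norm_smul, hnc2, hpt, inv_mul_cancel₀ (ne_of_gt h1r)]
  · have hAsub : ‖A - (B + T)‖ ≤ r := by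
      have h1r' : (1 + r)⁻¹ ≤ 1 := by
        rw [inv_le_one_iff₀]; right; linarith
      have hconst : ‖(((1 + r : ℝ)⁻¹ - 1 : ℝ) : 𝕜)‖ = 1 - (1 + r)⁻¹ := by
        rw [RCLike.norm_ofReal, abs_of_nonpos (by linarith), neg_sub]
      refine ContinuousLinearMap.opNorm_le_bound _ hr0 fun x => ?_
      refine ContinuousLinearMap.opNorm_le_bound _ (by positivity) fun y => ?_
      have h1 : (A - (B + T)) x y = (((1 + r : ℝ)⁻¹ - 1 : ℝ) : 𝕜) • ((B + T) x y) := by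
        rw [hAdef]
        simp only [ContinuousLinearMap.sub_apply, ContinuousLinearMap.smul_apply]
        push_cast
        module
      rw [h1, my_norm_smul, hconst]
      have h2 := hbound x y
      have h3 : (1 - (1 + r)⁻¹) * ((1 + r) * (‖x‖ * ‖y‖)) = r * (‖x‖ * ‖y‖) := by
        rw [← mul_assoc, sub_mul, inv_mul_cancel₀ (ne_of_gt h1r), one_mul]
        ring
      have h4 : (0:ℝ) ≤ 1 - (1 + r)⁻¹ := by linarith
      calc (1 - (1 + r)⁻¹) * ‖(B + T) x y‖
          ≤ (1 - (1 + r)⁻¹) * ((1 + r) * (‖x‖ * ‖y‖)) := by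
            exact mul_le_mul_of_nonneg_left h2 h4
        _ = r * (‖x‖ * ‖y‖) := h3
        _ = r * ‖x‖ * ‖y‖ := by ring
    have hstep : ‖A - B‖ ≤ r + ‖g‖ := by
      have hT' : B + T - B = T := by rw [add_sub_cancel_left]
      have htri := norm_sub_le_norm_sub_add_norm_sub A (B + T) B
      rw [hT'] at htri
      linarith
    have hfinal : 2 * r + (δ + η) < ε := by
      have e1 : (2 * r + (δ + η)) * (1 - ρ) = (δ + η) * (1 + ρ) := by
        linear_combination 2 * hrρ
      have e2 : (δ + η) * (1 + ρ) ≤ 2 * δ * (1 + ρ) :=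
        mul_le_mul_of_nonneg_right (by linarith) (by linarith)
      have e3 : 2 * δ * (1 + ρ) = ε * (1 - ρ) / 2 := by
        rw [hδdef]; field_simp; ring
      have e5 : (2 * r + (δ + η)) * (1 - ρ) ≤ (ε / 2) * (1 - ρ) := by
        calc (2 * r + (δ + η)) * (1 - ρ) = (δ + η) * (1 + ρ) := e1
          _ ≤ 2 * δ * (1 + ρ) := e2
          _ = ε * (1 - ρ) / 2 := e3
          _ = (ε / 2) * (1 - ρ) := by ring
      have e6 := le_of_mul_le_mul_right e5 h1ρ
      linarith
    calc ‖A - B‖ ≤ r + ‖g‖ := hstep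
      _ < 2 * r + (δ + η) := by linarith
      _ < ε := hfinal
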